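/- arXiv:2510.24504 — 4 statements merged into one kernel-verified Lean document; each statement's English description precedes it below -/
import Mathlib

section
/- Let Ω be an algebraically closed field, M a separably closed subfield of Ω, and A a subfield of M such that the field extension M/A is separable. Then the set of elements of Ω that are separably algebraic over A coincides with the relative algebraic closure of A in M; that is, {x ∈ Ω : x is algebraic and separable over A} = {x ∈ M : x is algebraic over A}. In particular, the relative algebraic closure of A in M is a separable closure of A. -/
/-!
A separable algebraic element over `A` is a root of a separable polynomial over `A ⊆ M`, which
splits in the separably closed field `M`; so it lies in `M`. Conversely, let `x ∈ M` be algebraic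
and inseparable over `A` in characteristic `p`: its minimal polynomial is `g(X^p)` with
`deg g = e ≥ 1`, so the coefficients of `g` give a nontrivial `A`-linear relation among
`1, x^p, …, x^(ep)`. These lie in `M^p` and are `A^p`-independent, being the `p`-th powers of
`1, x, …, x^e`, which are `A`-independent as `e < deg x`. This contradicts the linear disjointness
of `M^p` from `A` over `A^p`, which follows from the hypothesis by symmetry of linear disjointness.
Finally, the separable algebraic elements form the separable closure of `A` in `Ω`, which is
separably closed.
-/

/-- `v` is linearly independent over the subset `S` of `Ω`. -/
def LinIndepOver (Ω : Type*) [Field Ω] (S : Set Ω) {n : ℕ} (v : Fin n → Ω) : Prop :=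
  ∀ c : Fin n → Ω, (∀ i, c i ∈ S) → (∑ i, c i * v i) = 0 → ∀ i, c i = 0

/-- `F` is linearly disjoint from `L` over `K` (all subsets of the ambient field `Ω`):
every finite tuple from `F` that is linearly independent over `K` remains linearly
independent over `L`. -/
def LinDisjOver (Ω : Type*) [Field Ω] (K F L : Set Ω) : Prop :=
  ∀ (n : ℕ) (v : Fin n → Ω), (∀ i, v i ∈ F) →
    LinIndepOver Ω K v → LinIndepOver Ω L v

/-- The field extension `L/K` (subfields of `Ω`, as subsets) is separable: either the
characteristic is `0` (so the condition below is vacuous), or the characteristic is a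
prime `p` and `K` is linearly disjoint from `L^p` over `K^p`. -/
def SepExtOn (Ω : Type*) [Field Ω] (K L : Set Ω) : Prop :=
  ∀ p : ℕ, p.Prime → CharP Ω p →
    LinDisjOver Ω ((· ^ p) '' K) K ((· ^ p) '' L)

open Polynomial

section

variable {Ω : Type*} [Field Ω]

theorem linIndepOver_iff_linearIndependent {K : Subfield Ω} {n : ℕ} {v : Fin n → Ω} :
    LinIndepOver Ω K v ↔ LinearIndependent K v := by
  rw [Fintype.linearIndependent_iff]
  refine ⟨fun h g hg i => Subtype.ext (h (fun j => g j) (fun j => (g j).2) hg i),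
    fun h c hc hsum i => ?_⟩
  exact congrArg Subtype.val (h (fun j => ⟨c j, hc j⟩) hsum i)

theorem LinDisjOver.symm {K L : Subfield Ω} {F : Set Ω} (hKL : K ≤ L)
    (H : LinDisjOver Ω K F L) : LinDisjOver Ω K L F := by
  intro n w hwL hwK c hcF hsum
  -- Expand `c` in a `K`-basis `b` taken among its entries: as `b` stays `L`-independent, the
  -- relation `∑ cᵢ wᵢ = 0` splits into `K`-linear relations among the `wᵢ`.
  obtain ⟨κ, a, ha, hspan, hli⟩ := exists_linearIndependent' K c
  have : Finite κ := Finite.of_injective a ha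
  set e := (Finite.equivFin κ).symm
  set b : Fin (Nat.card κ) → Ω := (c ∘ a) ∘ e
  have hbL : LinIndepOver Ω L b := H _ b (fun k => hcF _)
    (linIndepOver_iff_linearIndependent.2 (hli.comp e e.injective))
  have hcb : ∀ i, ∃ l : Fin (Nat.card κ) → K, ∑ k, l k • b k = c i := by
    intro i
    rw [← Submodule.mem_span_range_iff_exists_fun, e.surjective.range_comp, hspan]
    exact Submodule.subset_span (Set.mem_range_self i)
  choose l hl using hcb
  have hcoeff : ∀ k, ∑ i, (l i k : Ω) * w i = 0 := by
    refine hbL _ (fun k => L.sum_mem fun i _ => L.mul_mem (hKL (l i k).2) (hwL i)) ?_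
    calc ∑ k, (∑ i, (l i k : Ω) * w i) * b k = ∑ i, c i * w i := by
          simp_rw [← hl, Finset.sum_mul, Subfield.smul_def, smul_eq_mul]
          rw [Finset.sum_comm]
          exact Finset.sum_congr rfl fun i _ => Finset.sum_congr rfl fun k _ => by ring
      _ = 0 := hsum
  intro i
  rw [← hl i]
  refine Finset.sum_eq_zero fun k _ => ?_
  rw [Subfield.smul_def, hwK (fun i => (l i k : Ω)) (fun i => (l i k).2) (hcoeff k) i, zero_smul]

theorem LinIndepOver.pow_expChar {S : Set Ω} (p : ℕ) [ExpChar Ω p] {n : ℕ} {v : Fin n → Ω}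
    (h : LinIndepOver Ω S v) : LinIndepOver Ω ((· ^ p) '' S) (fun i => v i ^ p) := by
  intro c hc hsum i
  choose d hdS hdc using hc
  have hd : ∑ i, d i * v i = 0 := by
    refine pow_eq_zero_iff (expChar_pos Ω p).ne' |>.1 ?_
    simpa only [sum_pow_char, mul_pow, hdc] using hsum
  rw [← hdc i, h d hdS hd i]
  exact zero_pow (expChar_pos Ω p).ne'

theorem linIndepOver_pow_of_le_natDegree (A : Subfield Ω) (x : Ω) {m : ℕ}
    (hm : m ≤ (minpoly A x).natDegree) : LinIndepOver Ω A (fun j : Fin m => x ^ (j : ℕ)) :=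
  linIndepOver_iff_linearIndependent.2
    ((linearIndependent_pow x).comp (Fin.castLE hm) (Fin.castLE_injective hm))

theorem aeval_eq_sum_fin_coeff_mul (A : Subfield Ω) (g : A[X]) (y : Ω) :
    aeval y g = ∑ j : Fin (g.natDegree + 1), (g.coeff j : Ω) * y ^ (j : ℕ) := by
  rw [aeval_eq_sum_range, Fin.sum_univ_eq_sum_range (fun j => (g.coeff j : Ω) * y ^ j)]
  rfl

theorem mem_of_isSeparable_of_isSepClosed {A M : Subfield Ω} (hAM : A ≤ M) [IsSepClosed M]
    {x : Ω} (hx : IsSeparable A x) : x ∈ M := by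
  have hsplit := IsSepClosed.splits_of_separable _ (Separable.map (f := Subfield.inclusion hAM) hx)
  obtain ⟨y, rfl⟩ := hsplit.mem_range_of_isRoot (map_ne_zero (minpoly.ne_zero hx.isIntegral))
    (i := M.subtype) (by
      rw [Polynomial.map_map, IsRoot, eval_map]
      exact minpoly.aeval A x)
  exact y.2

theorem isSeparable_of_mem_of_linDisjOver {M A : Subfield Ω} (hAM : A ≤ M) {p : ℕ}
    [Fact p.Prime] [CharP Ω p]
    (hdisj : LinDisjOver Ω ((· ^ p) '' (A : Set Ω)) A ((· ^ p) '' (M : Set Ω)))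
    {x : Ω} (hxM : x ∈ M) (hx : IsAlgebraic A x) : IsSeparable A x := by
  have hdisj' : LinDisjOver Ω ((· ^ p) '' (A : Set Ω)) ((· ^ p) '' (M : Set Ω)) A := by
    have hfrob (K : Subfield Ω) : (· ^ p) '' (K : Set Ω) = K.map (frobenius Ω p) := by
      rw [Subfield.coe_map]
      rfl
    rw [hfrob, hfrob] at hdisj ⊢
    exact hdisj.symm ((Subfield.gc_map_comap _).monotone_l hAM)
  have : CharP A p := A.subtype.charP A.subtype.injective p
  refine (separable_or p (minpoly.irreducible hx.isIntegral)).resolve_right ?_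
  rintro ⟨-, g, -, hg⟩
  set e := g.natDegree
  have hg0 : g ≠ 0 := by
    rintro rfl
    exact minpoly.ne_zero hx.isIntegral (by rw [← hg, map_zero])
  have he : e + 1 ≤ (minpoly A x).natDegree := by
    have hpos := minpoly.natDegree_pos hx.isIntegral
    have hp := (Fact.out : p.Prime).two_le
    rw [← hg, natDegree_expand] at hpos ⊢
    nlinarith
  have hw : LinIndepOver Ω A (fun j : Fin (e + 1) => (x ^ (j : ℕ)) ^ p) :=
    hdisj' _ _ (fun j => ⟨x ^ (j : ℕ), M.pow_mem hxM _, rfl⟩)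
      ((linIndepOver_pow_of_le_natDegree A x he).pow_expChar p)
  have hrel : ∑ j : Fin (e + 1), (g.coeff j : Ω) * (x ^ (j : ℕ)) ^ p = 0 := by
    simp_rw [pow_right_comm _ _ p]
    rw [← aeval_eq_sum_fin_coeff_mul, ← expand_aeval, hg, minpoly.aeval]
  have hlead : g.coeff e = 0 := Subtype.ext (hw _ (fun j => (g.coeff j).2) hrel (Fin.last e))
  exact hg0 (leadingCoeff_eq_zero.1 hlead)

theorem isSeparable_of_mem_of_sepExtOn {M A : Subfield Ω} (hAM : A ≤ M)
    (hsep : SepExtOn Ω A M) {x : Ω} (hxM : x ∈ M) (hx : IsAlgebraic A x) : IsSeparable A x := by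
  obtain ⟨p, hchar⟩ := CharP.exists Ω
  rcases CharP.char_is_prime_or_zero Ω p with hp | rfl
  · have := Fact.mk hp
    exact isSeparable_of_mem_of_linDisjOver hAM (hsep p hp hchar) hxM hx
  · have := CharP.charP_to_charZero Ω
    have := A.subtype.charZero
    exact (minpoly.irreducible hx.isIntegral).separable

end

theorem separable_algebraic_elements_eq_relative_algebraic_closure
    (Ω : Type*) [Field Ω] [IsAlgClosed Ω]
    (M A : Subfield Ω) (hAM : A ≤ M)
    (hMscl : IsSepClosed ↥M)
    (hsep : SepExtOn Ω (A : Set Ω) (M : Set Ω)) :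
    {x : Ω | IsAlgebraic ↥A x ∧ IsSeparable ↥A x} =
      {x : Ω | x ∈ M ∧ IsAlgebraic ↥A x} ∧
    -- in particular, the relative algebraic closure of `A` in `M` is a separable closure
    -- of `A`: every element of it is separable algebraic over `A` (by the above equality)
    -- and, as a field, it is separably closed
    IsSepClosed ↥(Subfield.closure {x : Ω | x ∈ M ∧ IsAlgebraic ↥A x}) := by
  have hsets : {x : Ω | IsAlgebraic A x ∧ IsSeparable A x} = {x | x ∈ M ∧ IsAlgebraic A x} :=
    Set.ext fun x =>
      ⟨fun ⟨hx, hxs⟩ => ⟨mem_of_isSeparable_of_isSepClosed hAM hxs, hx⟩,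
        fun ⟨hxM, hx⟩ => ⟨hx, isSeparable_of_mem_of_sepExtOn hAM hsep hxM hx⟩⟩
  have hclosure : {x : Ω | IsAlgebraic A x ∧ IsSeparable A x} =
      (separableClosure A Ω).toSubfield :=
    Set.ext fun _ => ⟨And.right, fun hxs => ⟨hxs.isIntegral.isAlgebraic, hxs⟩⟩
  refine ⟨hsets, ?_⟩
  rw [← hsets, hclosure, Subfield.closure_eq]
  exact (separableClosure.isSepClosure A Ω).sep_closed
end

section
/- Let ℒ be a first-order language extending the language of rings and let M be an ℒ-structure whose underlying ring is a field. Then for every subset A ⊆ M, the definable closure dcl_ℒ(A) is a subfield of M and the field extension M/dcl_ℒ(A) is separable. -/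
/-!
STATEMENT 2 (Remark 2.2(5)): If `L` extends the language of rings and `M` is an
`L`-structure whose underlying ring is a field, then for every `A ⊆ M` the definable
closure `dcl_L(A)` is a subfield of `M` and the extension `M/dcl_L(A)` is separable.
-/

open FirstOrder FirstOrder.Ring

/-- The definable closure of `A` in the `L`-structure `M`: the set of `b` that are the
unique solution of some `L`-formula with parameters from `A`. -/
def dcl (L : Language) (M : Type*) [L.Structure M] (A : Set M) : Set M :=
  {b | ∃ ψ : L.Formula (↥A ⊕ Fin 1),
    ψ.Realize (Sum.elim Subtype.val fun _ => b) ∧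
    ∀ b' : M, ψ.Realize (Sum.elim Subtype.val fun _ => b') → b' = b}


/-!
The field operations are graphs of polynomial systems (for inversion, with `0⁻¹ = 0`, take
`a²y = a ∧ ay² = y`), so `dcl` is closed under them.

For separability in characteristic `p`, let `v` be a tuple from `K = dcl(A)` and consider the
relations `w` with `∑ wᵢᵖ vᵢ = 0`; since Frobenius is additive they form an `M`-subspace of `Mⁿ`.
If it is nonzero, a relation `e` of minimal support normalized by `e j = 1` is the only relation
with support in that of `e` and `j`-th coordinate `1`, so it is defined over `v` and its
coordinates lie in `K`; then `∑ eᵢᵖ vᵢ = 0` is a nontrivial relation over `Kᵖ`.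
-/

open FirstOrder.Language

theorem sq_mul_eq_and_mul_sq_eq_iff_eq_inv {K : Type*} [Field K] (a y : K) :
    a ^ 2 * y = a ∧ a * y ^ 2 = y ↔ y = a⁻¹ := by
  rcases eq_or_ne a 0 with rfl | ha
  · simp [eq_comm]
  constructor
  · rintro ⟨h, -⟩
    rw [pow_two, mul_assoc, mul_eq_left₀ ha] at h
    exact eq_inv_of_mul_eq_one_right h
  · rintro rfl
    constructor <;> field_simp

theorem Submodule.exists_minimal_support_normalized {K ι : Type*} [DivisionRing K] [Finite ι]
    {W : Submodule K (ι → K)} (hW : W ≠ ⊥) :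
    ∃ e ∈ W, ∃ j, e j = 1 ∧
      ∀ w ∈ W, Function.support w ⊆ Function.support e → w j = 1 → w = e := by
  obtain ⟨d, ⟨hdW, hd0⟩, hmin⟩ :=
    (measure fun w : ι → K => (Function.support w).ncard).wf.has_min
      {w | w ∈ W ∧ w ≠ 0} ((Submodule.ne_bot_iff W).1 hW)
  obtain ⟨j, hj⟩ := Function.ne_iff.1 hd0
  have hsupp : Function.support ((d j)⁻¹ • d) = Function.support d :=
    Function.support_const_smul_of_ne_zero _ _ (inv_ne_zero hj)
  refine ⟨(d j)⁻¹ • d, W.smul_mem _ hdW, j, inv_mul_cancel₀ hj, fun w hw hwe hwj => ?_⟩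
  by_contra hne
  refine hmin (w - (d j)⁻¹ • d) ⟨W.sub_mem hw (W.smul_mem _ hdW), sub_ne_zero.2 hne⟩ ?_
  refine Set.ncard_lt_ncard ((Set.ssubset_iff_of_subset ?_).2 ⟨j, ?_, ?_⟩)
  · rw [← hsupp]
    exact (Function.support_sub _ _).trans (Set.union_subset hwe le_rfl)
  · exact Function.mem_support.2 hj
  · simp [hwj, inv_mul_cancel₀ hj]

section Frobenius

variable {K ι : Type*} [Field K] [Fintype ι]

def frobeniusRelations (p : ℕ) [ExpChar K p] (v : ι → K) : Submodule K (ι → K) where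
  carrier := {w | ∑ i, w i ^ p * v i = 0}
  add_mem' hw hw' := by simp_all [add_pow_expChar, add_mul, Finset.sum_add_distrib]
  zero_mem' := by simp [zero_pow (expChar_pos K p).ne']
  smul_mem' c w hw := by simp_all [mul_pow, mul_assoc, ← Finset.mul_sum]

theorem mem_frobeniusRelations {p : ℕ} [ExpChar K p] {v w : ι → K} :
    w ∈ frobeniusRelations p v ↔ ∑ i, w i ^ p * v i = 0 :=
  Iff.rfl

end Frobenius

section Dcl

variable {L : Language} {M : Type*} [L.Structure M] {A : Set M}

theorem mem_dcl_of_unique_realize {ι κ : Type*} [Finite ι] [Finite κ] (θ : L.Formula (ι ⊕ κ))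
    {b : ι → M} (hb : ∀ i, b i ∈ dcl L M A) {w : κ → M} (hw : θ.Realize (Sum.elim b w))
    (huniq : ∀ w', θ.Realize (Sum.elim b w') → w' = w) (k : κ) : w k ∈ dcl L M A := by
  choose ψ hψ hψuniq using hb
  -- `∃ u, (⋀ᵢ ψᵢ(A, u (inl i))) ∧ θ(u) ∧ x = u (inr k)`
  let χ : L.Formula ((A ⊕ Fin 1) ⊕ (ι ⊕ κ)) :=
    Formula.iInf (fun i => (ψ i).relabel (Sum.elim (Sum.inl ∘ Sum.inl) fun _ => .inr (.inl i)))
      ⊓ θ.relabel Sum.inr ⊓ (Term.var (.inl (.inr 0))).equal (Term.var (.inr (.inr k)))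
  have hχ : ∀ x u, χ.Realize (Sum.elim (Sum.elim Subtype.val fun _ => x) u) ↔
      (∀ i, (ψ i).Realize (Sum.elim Subtype.val fun _ => u (.inl i))) ∧ θ.Realize u ∧
        x = u (.inr k) := by
    intro x u
    simp only [χ, Formula.realize_inf, Formula.realize_iInf, Formula.realize_relabel,
      Formula.realize_equal, Term.realize_var, Sum.elim_inl, Sum.elim_inr, Sum.elim_comp_inr,
      Sum.comp_elim, ← Function.comp_assoc, Sum.elim_comp_inl, and_assoc]
    rfl
  refine ⟨χ.iExs (ι ⊕ κ), Formula.realize_iExs.2 ⟨Sum.elim b w, (hχ _ _).2 ⟨hψ, hw, rfl⟩⟩, ?_⟩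
  intro x hx
  obtain ⟨u, hχu⟩ := Formula.realize_iExs.1 hx
  obtain ⟨hu, hθ, rfl⟩ := (hχ _ _).1 hχu
  have hu_inl : u ∘ Sum.inl = b := funext fun i => hψuniq i _ (hu i)
  rw [← Sum.elim_comp_inl_inr u, hu_inl] at hθ
  exact congrFun (huniq _ hθ) k

variable [CommRing M] [CompatibleRing M]

theorem mem_dcl_of_unique_common_zero (φ : Language.ring →ᴸ L) [φ.IsExpansionOn M]
    {ι κ σ : Type*} [Finite ι] [Finite κ] [Finite σ] (P : σ → FreeCommRing (ι ⊕ κ))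
    {b : ι → M} (hb : ∀ i, b i ∈ dcl L M A) {w : κ → M}
    (hw : ∀ s, FreeCommRing.lift (Sum.elim b w) (P s) = 0)
    (huniq : ∀ w', (∀ s, FreeCommRing.lift (Sum.elim b w') (P s) = 0) → w' = w) (k : κ) :
    w k ∈ dcl L M A := by
  have hrealize : ∀ u : ι ⊕ κ → M,
      (φ.onFormula (Formula.iInf fun s => (termOfFreeCommRing (P s)).equal 0)).Realize u ↔
        ∀ s, FreeCommRing.lift u (P s) = 0 := by
    simp [LHom.realize_onFormula, Formula.realize_iInf, realize_termOfFreeCommRing]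
  exact mem_dcl_of_unique_realize _ hb ((hrealize _).2 hw)
    (fun w' h => huniq w' ((hrealize _).1 h)) k

theorem mem_dcl_of_common_zero_iff (φ : Language.ring →ᴸ L) [φ.IsExpansionOn M]
    {ι σ : Type*} [Finite ι] [Finite σ] (P : σ → FreeCommRing (ι ⊕ Unit))
    {b : ι → M} (hb : ∀ i, b i ∈ dcl L M A) {x : M}
    (hP : ∀ y, (∀ s, FreeCommRing.lift (Sum.elim b fun _ => y) (P s) = 0) ↔ y = x) :
    x ∈ dcl L M A :=
  mem_dcl_of_unique_common_zero φ P hb (w := fun _ => x) ((hP x).2 rfl)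
    (fun _ h => funext fun _ => (hP _).1 h) ()

end Dcl

open FreeCommRing in
def dclSubfield {L : Language} {M : Type*} [L.Structure M] [Field M] [CompatibleRing M]
    (φ : Language.ring →ᴸ L) [φ.IsExpansionOn M] (A : Set M) : Subfield M where
  carrier := dcl L M A
  zero_mem' := mem_dcl_of_common_zero_iff φ (fun _ : Unit => of (.inr ())) (b := ![])
    finZeroElim (by simp)
  one_mem' := mem_dcl_of_common_zero_iff φ (fun _ : Unit => of (.inr ()) - 1) (b := ![])
    finZeroElim (by simp [sub_eq_zero])
  add_mem' {a b} ha hb := mem_dcl_of_common_zero_iff φ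
    (fun _ : Unit => of (.inr ()) - (of (.inl 0) + of (.inl 1))) (b := ![a, b])
    (Fin.forall_fin_two.2 ⟨ha, hb⟩) (by simp [sub_eq_zero])
  mul_mem' {a b} ha hb := mem_dcl_of_common_zero_iff φ
    (fun _ : Unit => of (.inr ()) - of (.inl 0) * of (.inl 1)) (b := ![a, b])
    (Fin.forall_fin_two.2 ⟨ha, hb⟩) (by simp [sub_eq_zero])
  neg_mem' {a} ha := mem_dcl_of_common_zero_iff φ
    (fun _ : Unit => of (.inr ()) + of (.inl 0)) (b := ![a])
    (Fin.forall_fin_one.2 ha) (by simp [add_eq_zero_iff_eq_neg])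
  inv_mem' a ha := mem_dcl_of_common_zero_iff φ
    ![of (.inl 0) ^ 2 * of (.inr ()) - of (.inl 0), of (.inl 0) * of (.inr ()) ^ 2 - of (.inr ())]
    (b := ![a]) (Fin.forall_fin_one.2 ha)
    (fun y => by
      simpa [Fin.forall_fin_two, sub_eq_zero] using sq_mul_eq_and_mul_sq_eq_iff_eq_inv a y)

open FreeCommRing in
theorem dcl_isSubfield_and_separable
    (L : Language) (M : Type*) [Field M] [CompatibleRing M] [L.Structure M]
    -- the language `L` extends the language of rings, compatibly with the field structure
    (φ : Language.ring →ᴸ L) [φ.IsExpansionOn M]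
    (A : Set M) :
    (∃ K : Subfield M, (K : Set M) = dcl L M A) ∧
      SepExtOn M (dcl L M A) (Set.univ : Set M) := by
  classical
  refine ⟨⟨dclSubfield φ A, rfl⟩, fun p hp hchar n v hv hindep => ?_⟩
  have : ExpChar M p := ExpChar.prime hp
  have hW : frobeniusRelations p v = ⊥ := by
    by_contra hW
    obtain ⟨e, he, j, hej, huniq⟩ := Submodule.exists_minimal_support_normalized hW
    let P : Fin n ⊕ Fin 2 → FreeCommRing (Fin n ⊕ Fin n) := Sum.elim
      (fun i => if e i = 0 then of (.inr i) else 0)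
      ![of (.inr j) - 1, ∑ i, of (.inr i) ^ p * of (.inl i)]
    have hP : ∀ w, (∀ s, lift (Sum.elim v w) (P s) = 0) ↔
        Function.support w ⊆ Function.support e ∧ w j = 1 ∧ w ∈ frobeniusRelations p v := by
      simp [P, Sum.forall, Fin.forall_fin_two, sub_eq_zero, Function.support_subset_iff,
        not_imp_not, apply_ite, mem_frobeniusRelations]
    have hdcl : ∀ i, e i ∈ dcl L M A :=
      mem_dcl_of_unique_common_zero φ P hv ((hP e).2 ⟨le_rfl, hej, he⟩) fun w hw => by
        obtain ⟨hwe, hwj, hwW⟩ := (hP w).1 hw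
        exact huniq w hwW hwe hwj
    simpa [hej] using hindep (fun i => e i ^ p) (fun i => ⟨e i, hdcl i, rfl⟩) he j
  intro c hc hsum i
  choose d _ hd using hc
  have hd0 : d ∈ frobeniusRelations p v := by simpa [mem_frobeniusRelations, hd] using hsum
  rw [hW, Submodule.mem_bot] at hd0
  simp [← hd, hd0, hp.ne_zero]
end

section
/- Let Ω be a field, A a subfield of Ω, and N, N' intermediate fields with A ⊆ N ⊆ Ω and A ⊆ N' ⊆ Ω such that N and N' are linearly disjoint over A. Suppose D: N → N and D': N' → N' are derivations that agree on A. Then there exists a unique derivation D'' on the compositum N·N' (the subfield of Ω generated by N ∪ N') such that D'' restricts to D on N and to D' on N'. -/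
/-- `d : Ω → Ω` restricts to a derivation of the subfield `K`: it maps `K` into `K`, and
on `K` it is additive and satisfies the Leibniz rule. -/
def IsDerivationOn (Ω : Type*) [Field Ω] (K : Subfield Ω) (d : Ω → Ω) : Prop :=
  (∀ x ∈ K, d x ∈ K) ∧
  (∀ x ∈ K, ∀ y ∈ K, d (x + y) = d x + d y) ∧
  (∀ x ∈ K, ∀ y ∈ K, d (x * y) = d x * y + x * d y)

section Aux
variable {Ω : Type*} [Field Ω]

theorem derOn_one {K : Subfield Ω} {d : Ω → Ω} (h : IsDerivationOn Ω K d) : d 1 = 0 := by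
  have h1 := h.2.2 1 K.one_mem 1 K.one_mem
  simp only [mul_one, one_mul] at h1
  exact (left_eq_add.mp h1)

theorem derOn_zero {K : Subfield Ω} {d : Ω → Ω} (h : IsDerivationOn Ω K d) : d 0 = 0 := by
  have h1 := h.2.1 0 K.zero_mem 0 K.zero_mem
  simp only [add_zero] at h1
  exact (left_eq_add.mp h1)

theorem derOn_neg {K : Subfield Ω} {d : Ω → Ω} (h : IsDerivationOn Ω K d) {x : Ω}
    (hx : x ∈ K) : d (-x) = -d x := by
  have h1 := h.2.1 x hx (-x) (K.neg_mem hx)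
  rw [add_neg_cancel, derOn_zero h] at h1
  exact eq_neg_of_add_eq_zero_right h1.symm

theorem derOn_sum {K : Subfield Ω} {d : Ω → Ω} (h : IsDerivationOn Ω K d) {ι : Type*}
    (s : Finset ι) (f : ι → Ω) (hf : ∀ i ∈ s, f i ∈ K) :
    d (∑ i ∈ s, f i) = ∑ i ∈ s, d (f i) := by
  classical
  induction s using Finset.cons_induction with
  | empty => simpa using derOn_zero h
  | cons a s ha ih =>
    rw [Finset.sum_cons, Finset.sum_cons,
      h.2.1 _ (hf a (Finset.mem_cons_self a s)) _
        (Subfield.sum_mem K fun i hi => hf i (Finset.mem_cons_of_mem hi)),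
      ih fun i hi => hf i (Finset.mem_cons_of_mem hi)]

end Aux

theorem extract_basis (Ω : Type*) [Field Ω] (A N : Subfield Ω) :
    ∀ (n : ℕ) (x : Fin n → Ω), (∀ i, x i ∈ N) →
    ∃ (m : ℕ) (b : Fin m → Ω), (∀ j, b j ∈ N) ∧ LinIndepOver Ω (A : Set Ω) b ∧
      ∀ i, ∃ a : Fin m → Ω, (∀ j, a j ∈ A) ∧ x i = ∑ j, a j * b j := by
  intro n
  induction n with
  | zero =>
    intro x _
    exact ⟨0, Fin.elim0, fun j => j.elim0, fun c _ _ i => i.elim0, fun i => i.elim0⟩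
  | succ n ih =>
    intro x hx
    obtain ⟨m, b, hbN, hbli, hrep⟩ := ih (fun i => x i.castSucc) (fun i => hx _)
    by_cases hc : ∃ a : Fin m → Ω, (∀ j, a j ∈ A) ∧ x (Fin.last n) = ∑ j, a j * b j
    · refine ⟨m, b, hbN, hbli, fun i => ?_⟩
      induction i using Fin.lastCases with
      | last => exact hc
      | cast i => exact hrep i
    · refine ⟨m + 1, Fin.snoc b (x (Fin.last n)), ?_, ?_, ?_⟩
      · intro j
        induction j using Fin.lastCases with
        | last => simpa using hx (Fin.last n)
        | cast j => simpa using hbN j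
      · intro c hcA hsum j
        rw [Fin.sum_univ_castSucc] at hsum
        simp only [Fin.snoc_castSucc, Fin.snoc_last] at hsum
        by_cases hcl : c (Fin.last m) = 0
        · have h0 : ∑ j, c j.castSucc * b j = 0 := by
            rw [hcl] at hsum; simpa using hsum
          have hz := hbli (fun j => c j.castSucc) (fun j => hcA _) h0
          induction j using Fin.lastCases with
          | last => exact hcl
          | cast j => exact hz j
        · exfalso
          apply hc
          refine ⟨fun j => -(c j.castSucc) / c (Fin.last m), fun j => ?_, ?_⟩
          · exact A.div_mem (A.neg_mem (hcA _)) (hcA _)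
          · have hX : x (Fin.last n) =
                (∑ j, -(c j.castSucc) * b j) / c (Fin.last m) := by
              rw [eq_div_iff hcl]
              have : ∑ j, -(c j.castSucc) * b j = -(∑ j, c j.castSucc * b j) := by
                simp [neg_mul]
              rw [this]
              linear_combination hsum
            rw [hX, Finset.sum_div]
            exact Finset.sum_congr rfl fun j _ => by ring
      · intro i
        induction i using Fin.lastCases with
        | last =>
          refine ⟨Fin.snoc (fun _ => 0) 1, fun j => ?_, ?_⟩
          · induction j using Fin.lastCases with
            | last => simpa using A.one_mem
            | cast j => simpa using A.zero_mem
          · rw [Fin.sum_univ_castSucc]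
            simp
        | cast i =>
          obtain ⟨a, haA, hxa⟩ := hrep i
          refine ⟨Fin.snoc a 0, fun j => ?_, ?_⟩
          · induction j using Fin.lastCases with
            | last => simpa using A.zero_mem
            | cast j => simpa using haA j
          · rw [Fin.sum_univ_castSucc]
            simpa using hxa
theorem key_sum_zero (Ω : Type*) [Field Ω] (A N N' : Subfield Ω)
    (hAN : A ≤ N) (hAN' : A ≤ N')
    (hld : LinDisjOver Ω (A : Set Ω) (N : Set Ω) (N' : Set Ω))
    (D D' : Ω → Ω) (hD : IsDerivationOn Ω N D) (hD' : IsDerivationOn Ω N' D')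
    (hagree : ∀ a ∈ A, D a = D' a)
    (n : ℕ) (x y : Fin n → Ω) (hx : ∀ i, x i ∈ N) (hy : ∀ i, y i ∈ N')
    (h0 : ∑ i, x i * y i = 0) :
    ∑ i, (D (x i) * y i + x i * D' (y i)) = 0 := by
  obtain ⟨m, b, hbN, hbli, hrep⟩ := extract_basis Ω A N n x hx
  choose a haA hxa using hrep
  have hbli' : LinIndepOver Ω (N' : Set Ω) b := hld m b hbN hbli
  have hc0 : ∀ j, (∑ i, a i j * y i) = 0 := by
    have hsum : ∑ j, (∑ i, a i j * y i) * b j = 0 := by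
      calc ∑ j, (∑ i, a i j * y i) * b j
          = ∑ i, ∑ j, a i j * b j * y i := by
            rw [Finset.sum_comm]
            exact Finset.sum_congr rfl fun i _ => by
              rw [Finset.sum_mul]
              exact Finset.sum_congr rfl fun j _ => by ring
        _ = ∑ i, x i * y i := by
            exact Finset.sum_congr rfl fun i _ => by rw [hxa i, Finset.sum_mul]
        _ = 0 := h0
    exact hbli' (fun j => ∑ i, a i j * y i)
      (fun j => Subfield.sum_mem N' fun i _ => N'.mul_mem (hAN' (haA i j)) (hy i)) hsum
  have hDx : ∀ i, D (x i) = ∑ j, (D' (a i j) * b j + a i j * D (b j)) := by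
    intro i
    rw [hxa i, derOn_sum hD _ _ (fun j _ => N.mul_mem (hAN (haA i j)) (hbN j))]
    exact Finset.sum_congr rfl fun j _ => by
      rw [hD.2.2 _ (hAN (haA i j)) _ (hbN j), hagree _ (haA i j)]
  calc ∑ i, (D (x i) * y i + x i * D' (y i))
      = ∑ i, ∑ j, ((D' (a i j) * b j + a i j * D (b j)) * y i
          + (a i j * b j) * D' (y i)) := by
        refine Finset.sum_congr rfl fun i _ => ?_
        rw [hDx i, hxa i, Finset.sum_mul, Finset.sum_mul, ← Finset.sum_add_distrib]
    _ = ∑ j, (D (b j) * (∑ i, a i j * y i)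
          + b j * (∑ i, (D' (a i j) * y i + a i j * D' (y i)))) := by
        rw [Finset.sum_comm]
        refine Finset.sum_congr rfl fun j _ => ?_
        rw [Finset.mul_sum, Finset.mul_sum, ← Finset.sum_add_distrib]
        exact Finset.sum_congr rfl fun i _ => by ring
    _ = 0 := by
        refine Finset.sum_eq_zero fun j _ => ?_
        have h2 : ∑ i, (D' (a i j) * y i + a i j * D' (y i)) = D' (∑ i, a i j * y i) := by
          rw [derOn_sum hD' _ _ (fun i _ => N'.mul_mem (hAN' (haA i j)) (hy i))]
          exact (Finset.sum_congr rfl fun i _ => by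
            rw [hD'.2.2 _ (hAN' (haA i j)) _ (hy i)]).symm
        rw [h2, hc0 j, derOn_zero hD']
        ring
/-- membership in the subring generated by `N ∪ N'`: finite sums `∑ xᵢ yᵢ`. -/
def RepMem {Ω : Type*} [Field Ω] (N N' : Subfield Ω) (z : Ω) : Prop :=
  ∃ (n : ℕ) (x y : Fin n → Ω),
    (∀ i, x i ∈ N) ∧ (∀ i, y i ∈ N') ∧ z = ∑ i, x i * y i

section RepMemLemmas
variable {Ω : Type*} [Field Ω] {N N' : Subfield Ω}

theorem repMem_of_memN {x : Ω} (hx : x ∈ N) : RepMem N N' x :=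
  ⟨1, fun _ => x, fun _ => 1, fun _ => hx, fun _ => N'.one_mem, by simp⟩

theorem repMem_of_memN' {y : Ω} (hy : y ∈ N') : RepMem N N' y :=
  ⟨1, fun _ => 1, fun _ => y, fun _ => N.one_mem, fun _ => hy, by simp⟩

theorem repMem_zero : RepMem N N' (0 : Ω) :=
  ⟨0, Fin.elim0, Fin.elim0, fun i => i.elim0, fun i => i.elim0, by simp⟩

theorem repMem_one : RepMem N N' (1 : Ω) := repMem_of_memN N.one_mem

theorem repMem_add {z w : Ω} (hz : RepMem N N' z) (hw : RepMem N N' w) :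
    RepMem N N' (z + w) := by
  obtain ⟨n, x, y, hx, hy, rfl⟩ := hz
  obtain ⟨m, u, v, hu, hv, rfl⟩ := hw
  refine ⟨n + m, Fin.append x u, Fin.append y v,
    fun i => Fin.addCases (fun i => by simpa using hx i) (fun i => by simpa using hu i) i,
    fun i => Fin.addCases (fun i => by simpa using hy i) (fun i => by simpa using hv i) i,
    ?_⟩
  rw [Fin.sum_univ_add]
  simp [Fin.append_left, Fin.append_right]

theorem repMem_neg {z : Ω} (hz : RepMem N N' z) : RepMem N N' (-z) := by
  obtain ⟨n, x, y, hx, hy, rfl⟩ := hz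
  exact ⟨n, fun i => -(x i), y, fun i => N.neg_mem (hx i), hy, by
    rw [← Finset.sum_neg_distrib]
    exact Finset.sum_congr rfl fun i _ => by ring⟩

theorem repMem_mul {z w : Ω} (hz : RepMem N N' z) (hw : RepMem N N' w) :
    RepMem N N' (z * w) := by
  obtain ⟨n, x, y, hx, hy, rfl⟩ := hz
  obtain ⟨m, u, v, hu, hv, rfl⟩ := hw
  refine ⟨n * m, fun k => x (finProdFinEquiv.symm k).1 * u (finProdFinEquiv.symm k).2,
    fun k => y (finProdFinEquiv.symm k).1 * v (finProdFinEquiv.symm k).2,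
    fun k => N.mul_mem (hx _) (hu _), fun k => N'.mul_mem (hy _) (hv _), ?_⟩
  rw [← Equiv.sum_comp (finProdFinEquiv (m := n) (n := m))]
  simp only [Equiv.symm_apply_apply]
  rw [Fintype.sum_prod_type, Finset.sum_mul_sum]
  exact Finset.sum_congr rfl fun i _ => Finset.sum_congr rfl fun j _ => by ring

theorem repMem_subset_closure {z : Ω} (hz : RepMem N N' z) :
    z ∈ Subfield.closure ((N : Set Ω) ∪ (N' : Set Ω)) := by
  obtain ⟨n, x, y, hx, hy, rfl⟩ := hz
  exact Subfield.sum_mem _ fun i _ =>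
    mul_mem (Subfield.subset_closure (Set.mem_union_left _ (hx i)))
      (Subfield.subset_closure (Set.mem_union_right _ (hy i)))

theorem closure_eq_quot (N N' : Subfield Ω) :
    ∀ z ∈ Subfield.closure ((N : Set Ω) ∪ (N' : Set Ω)),
      ∃ p q : Ω, RepMem N N' p ∧ RepMem N N' q ∧ q ≠ 0 ∧ z = p / q := by
  intro z hz
  induction hz using Subfield.closure_induction with
  | mem x hx =>
    rcases hx with hx | hx
    · exact ⟨x, 1, repMem_of_memN hx, repMem_one, one_ne_zero, by simp⟩
    · exact ⟨x, 1, repMem_of_memN' hx, repMem_one, one_ne_zero, by simp⟩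
  | one => exact ⟨1, 1, repMem_one, repMem_one, one_ne_zero, by simp⟩
  | add x y hx hy ihx ihy =>
    obtain ⟨p, q, hp, hq, hq0, rfl⟩ := ihx
    obtain ⟨r, s, hr, hs, hs0, rfl⟩ := ihy
    exact ⟨p * s + r * q, q * s, repMem_add (repMem_mul hp hs) (repMem_mul hr hq),
      repMem_mul hq hs, mul_ne_zero hq0 hs0, by field_simp⟩
  | neg x hx ihx =>
    obtain ⟨p, q, hp, hq, hq0, rfl⟩ := ihx
    exact ⟨-p, q, repMem_neg hp, hq, hq0, by ring⟩
  | inv x hx ihx =>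
    obtain ⟨p, q, hp, hq, hq0, rfl⟩ := ihx
    by_cases hp0 : p = 0
    · exact ⟨0, 1, repMem_zero, repMem_one, one_ne_zero, by simp [hp0]⟩
    · exact ⟨q, p, hq, hp, hp0, by rw [inv_div]⟩
  | mul x y hx hy ihx ihy =>
    obtain ⟨p, q, hp, hq, hq0, rfl⟩ := ihx
    obtain ⟨r, s, hr, hs, hs0, rfl⟩ := ihy
    exact ⟨p * r, q * s, repMem_mul hp hr, repMem_mul hq hs, mul_ne_zero hq0 hs0,
      by field_simp⟩

end RepMemLemmas
theorem lift_of_welldef {Ω : Type*} [Field Ω] {ρ : Type*} (P : Ω → ρ → Prop) (val : ρ → Ω)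
    (hwd : ∀ z r s, P z r → P z s → val r = val s) :
    ∃ g : Ω → Ω, ∀ z r, P z r → g z = val r := by
  classical
  refine ⟨fun z => if h : ∃ r, P z r then val h.choose else 0, fun z r hr => ?_⟩
  have h : ∃ r, P z r := ⟨r, hr⟩
  simp only [dif_pos h]
  exact hwd z _ _ h.choose_spec hr

theorem val_welldef (Ω : Type*) [Field Ω] (A N N' : Subfield Ω)
    (hAN : A ≤ N) (hAN' : A ≤ N')
    (hld : LinDisjOver Ω (A : Set Ω) (N : Set Ω) (N' : Set Ω))
    (D D' : Ω → Ω) (hD : IsDerivationOn Ω N D) (hD' : IsDerivationOn Ω N' D')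
    (hagree : ∀ a ∈ A, D a = D' a)
    (n m : ℕ) (x y : Fin n → Ω) (u v : Fin m → Ω)
    (hx : ∀ i, x i ∈ N) (hy : ∀ i, y i ∈ N')
    (hu : ∀ i, u i ∈ N) (hv : ∀ i, v i ∈ N')
    (heq : ∑ i, x i * y i = ∑ i, u i * v i) :
    ∑ i, (D (x i) * y i + x i * D' (y i)) = ∑ i, (D (u i) * v i + u i * D' (v i)) := by
  have h0 : ∑ i : Fin (n + m),
      (Fin.append x (fun j => -u j)) i * (Fin.append y v) i = 0 := by
    rw [Fin.sum_univ_add]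
    simp only [Fin.append_left, Fin.append_right, neg_mul]
    rw [Finset.sum_neg_distrib]
    linear_combination heq
  have hkey := key_sum_zero Ω A N N' hAN hAN' hld D D' hD hD' hagree (n + m)
    (Fin.append x (fun j => -u j)) (Fin.append y v)
    (fun i => Fin.addCases (fun i => by simpa using hx i)
      (fun i => by simpa using N.neg_mem (hu i)) i)
    (fun i => Fin.addCases (fun i => by simpa using hy i)
      (fun i => by simpa using hv i) i) h0
  rw [Fin.sum_univ_add] at hkey
  simp only [Fin.append_left, Fin.append_right] at hkey
  have hrw : ∑ i : Fin m, (D (-u i) * v i + -u i * D' (v i))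
      = -∑ i : Fin m, (D (u i) * v i + u i * D' (v i)) := by
    rw [← Finset.sum_neg_distrib]
    exact Finset.sum_congr rfl fun i _ => by rw [derOn_neg hD (hu i)]; ring
  rw [hrw] at hkey
  linear_combination hkey

theorem exists_D0 (Ω : Type*) [Field Ω] (A N N' : Subfield Ω)
    (hAN : A ≤ N) (hAN' : A ≤ N')
    (hld : LinDisjOver Ω (A : Set Ω) (N : Set Ω) (N' : Set Ω))
    (D D' : Ω → Ω) (hD : IsDerivationOn Ω N D) (hD' : IsDerivationOn Ω N' D')
    (hagree : ∀ a ∈ A, D a = D' a) :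
    ∃ D0 : Ω → Ω, ∀ (z : Ω) (n : ℕ) (x y : Fin n → Ω),
      (∀ i, x i ∈ N) → (∀ i, y i ∈ N') → z = ∑ i, x i * y i →
      D0 z = ∑ i, (D (x i) * y i + x i * D' (y i)) := by
  obtain ⟨g, hg⟩ := lift_of_welldef (ρ := Σ n : ℕ, (Fin n → Ω) × (Fin n → Ω))
    (fun z r => (∀ i, r.2.1 i ∈ N) ∧ (∀ i, r.2.2 i ∈ N') ∧ z = ∑ i, r.2.1 i * r.2.2 i)
    (fun r => ∑ i, (D (r.2.1 i) * r.2.2 i + r.2.1 i * D' (r.2.2 i)))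
    (fun z r s hr hs => val_welldef Ω A N N' hAN hAN' hld D D' hD hD' hagree
      r.1 s.1 r.2.1 r.2.2 s.2.1 s.2.2 hr.1 hr.2.1 hs.1 hs.2.1
      (hr.2.2.symm.trans hs.2.2))
  exact ⟨g, fun z n x y hx hy hz => hg z ⟨n, (x, y)⟩ ⟨hx, hy, hz⟩⟩

theorem unique_derivation_on_compositum
    (Ω : Type*) [Field Ω] (A N N' : Subfield Ω)
    (hAN : A ≤ N) (hAN' : A ≤ N')
    -- `N` and `N'` are linearly disjoint over `A`
    (hld : LinDisjOver Ω (A : Set Ω) (N : Set Ω) (N' : Set Ω))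
    (D D' : Ω → Ω)
    (hD : IsDerivationOn Ω N D) (hD' : IsDerivationOn Ω N' D')
    -- `D` and `D'` agree on `A`
    (hagree : ∀ a ∈ A, D a = D' a) :
    -- there is a derivation `D''` of the compositum `N·N'` restricting to `D` on `N`
    -- and to `D'` on `N'` ...
    ∃ D'' : Ω → Ω,
      (IsDerivationOn Ω (Subfield.closure ((N : Set Ω) ∪ (N' : Set Ω))) D'' ∧
        (∀ x ∈ N, D'' x = D x) ∧ (∀ x ∈ N', D'' x = D' x)) ∧
      -- ... and it is unique (as a function on the compositum)
      (∀ E : Ω → Ω,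
        (IsDerivationOn Ω (Subfield.closure ((N : Set Ω) ∪ (N' : Set Ω))) E ∧
          (∀ x ∈ N, E x = D x) ∧ (∀ x ∈ N', E x = D' x)) →
        ∀ x ∈ Subfield.closure ((N : Set Ω) ∪ (N' : Set Ω)), E x = D'' x) := by
  classical
  obtain ⟨D0, hD0⟩ := exists_D0 Ω A N N' hAN hAN' hld D D' hD hD' hagree
  have hD0N : ∀ x ∈ N, D0 x = D x := by
    intro x hx
    rw [hD0 x 1 (fun _ => x) (fun _ => 1) (fun _ => hx) (fun _ => N'.one_mem) (by simp)]
    simp [derOn_one hD']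
  have hD0N' : ∀ y ∈ N', D0 y = D' y := by
    intro y hy
    rw [hD0 y 1 (fun _ => 1) (fun _ => y) (fun _ => N.one_mem) (fun _ => hy) (by simp)]
    simp [derOn_one hD]
  have hD0one : D0 (1 : Ω) = 0 := by rw [hD0N 1 N.one_mem, derOn_one hD]
  have hD0mem : ∀ z, RepMem N N' z → RepMem N N' (D0 z) := by
    rintro z ⟨n, x, y, hx, hy, rfl⟩
    rw [hD0 _ n x y hx hy rfl]
    exact Finset.sum_induction _ _ (fun a b ha hb => repMem_add ha hb) repMem_zero
      (fun i _ => repMem_add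
        (repMem_mul (repMem_of_memN (hD.1 _ (hx i))) (repMem_of_memN' (hy i)))
        (repMem_mul (repMem_of_memN (hx i)) (repMem_of_memN' (hD'.1 _ (hy i)))))
  have hD0add : ∀ z w, RepMem N N' z → RepMem N N' w → D0 (z + w) = D0 z + D0 w := by
    rintro z w ⟨n, x, y, hx, hy, rfl⟩ ⟨m, u, v, hu, hv, rfl⟩
    rw [hD0 _ n x y hx hy rfl, hD0 _ m u v hu hv rfl,
      hD0 _ (n + m) (Fin.append x u) (Fin.append y v)
        (fun i => Fin.addCases (fun i => by simpa using hx i)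
          (fun i => by simpa using hu i) i)
        (fun i => Fin.addCases (fun i => by simpa using hy i)
          (fun i => by simpa using hv i) i)
        (by rw [Fin.sum_univ_add]; simp [Fin.append_left, Fin.append_right])]
    rw [Fin.sum_univ_add]
    simp [Fin.append_left, Fin.append_right]
  have hD0mul : ∀ z w, RepMem N N' z → RepMem N N' w →
      D0 (z * w) = D0 z * w + z * D0 w := by
    rintro z w ⟨n, x, y, hx, hy, rfl⟩ ⟨m, u, v, hu, hv, rfl⟩
    rw [hD0 _ n x y hx hy rfl, hD0 _ m u v hu hv rfl,
      hD0 _ (n * m) (fun k => x (finProdFinEquiv.symm k).1 * u (finProdFinEquiv.symm k).2)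
        (fun k => y (finProdFinEquiv.symm k).1 * v (finProdFinEquiv.symm k).2)
        (fun k => N.mul_mem (hx _) (hu _)) (fun k => N'.mul_mem (hy _) (hv _))
        (by rw [← Equiv.sum_comp (finProdFinEquiv (m := n) (n := m))]
            simp only [Equiv.symm_apply_apply]
            rw [Fintype.sum_prod_type, Finset.sum_mul_sum]
            exact Finset.sum_congr rfl fun i _ => Finset.sum_congr rfl fun j _ => by ring)]
    rw [← Equiv.sum_comp (finProdFinEquiv (m := n) (n := m))]
    simp only [Equiv.symm_apply_apply]
    rw [Fintype.sum_prod_type, Finset.sum_mul_sum, Finset.sum_mul_sum,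
      ← Finset.sum_add_distrib]
    refine Finset.sum_congr rfl fun i _ => ?_
    rw [← Finset.sum_add_distrib]
    refine Finset.sum_congr rfl fun j _ => ?_
    rw [hD.2.2 _ (hx i) _ (hu j), hD'.2.2 _ (hy i) _ (hv j)]
    ring
  -- construct D'' on quotients
  obtain ⟨D'', hD''0⟩ := lift_of_welldef (ρ := Ω × Ω)
    (fun z r => RepMem N N' r.1 ∧ RepMem N N' r.2 ∧ r.2 ≠ 0 ∧ z = r.1 / r.2)
    (fun r => (D0 r.1 * r.2 - r.1 * D0 r.2) / r.2 ^ 2)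
    (by
      rintro z ⟨p, q⟩ ⟨r, s⟩ ⟨hp, hq, hq0, rfl⟩ ⟨hr, hs, hs0, heq⟩
      have E1 : p * s = r * q := (div_eq_div_iff hq0 hs0).mp heq
      have E2 : D0 p * s + p * D0 s = D0 r * q + r * D0 q := by
        have h3 := congrArg D0 E1
        rw [hD0mul _ _ hp hs, hD0mul _ _ hr hq] at h3
        linear_combination h3
      simp only
      rw [div_eq_div_iff (pow_ne_zero 2 hq0) (pow_ne_zero 2 hs0)]
      linear_combination (q * s) * E2 - (D0 q * s + D0 s * q) * E1)
  have hDq : ∀ (z p q : Ω), RepMem N N' p → RepMem N N' q → q ≠ 0 → z = p / q →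
      D'' z = (D0 p * q - p * D0 q) / q ^ 2 :=
    fun z p q hp hq h0 hz => hD''0 z (p, q) ⟨hp, hq, h0, hz⟩
  refine ⟨D'', ⟨⟨?_, ?_, ?_⟩, ?_, ?_⟩, ?_⟩
  · -- maps closure into closure
    intro z hz
    obtain ⟨p, q, hp, hq, hq0, rfl⟩ := closure_eq_quot N N' _ hz
    rw [hDq _ p q hp hq hq0 rfl]
    exact div_mem (sub_mem (mul_mem (repMem_subset_closure (hD0mem p hp))
        (repMem_subset_closure hq))
      (mul_mem (repMem_subset_closure hp) (repMem_subset_closure (hD0mem q hq))))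
      (pow_mem (repMem_subset_closure hq) 2)
  · -- additivity
    intro z hz w hw
    obtain ⟨p, q, hp, hq, hq0, rfl⟩ := closure_eq_quot N N' _ hz
    obtain ⟨r, s, hr, hs, hs0, rfl⟩ := closure_eq_quot N N' _ hw
    have hzw : p / q + r / s = (p * s + r * q) / (q * s) := by field_simp
    rw [hDq _ _ _ (repMem_add (repMem_mul hp hs) (repMem_mul hr hq))
        (repMem_mul hq hs) (mul_ne_zero hq0 hs0) hzw,
      hDq _ p q hp hq hq0 rfl, hDq _ r s hr hs hs0 rfl,
      hD0add _ _ (repMem_mul hp hs) (repMem_mul hr hq),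
      hD0mul p s hp hs, hD0mul r q hr hq, hD0mul q s hq hs]
    field_simp
    ring
  · -- Leibniz
    intro z hz w hw
    obtain ⟨p, q, hp, hq, hq0, rfl⟩ := closure_eq_quot N N' _ hz
    obtain ⟨r, s, hr, hs, hs0, rfl⟩ := closure_eq_quot N N' _ hw
    have hzw : p / q * (r / s) = (p * r) / (q * s) := by field_simp
    rw [hDq _ _ _ (repMem_mul hp hr) (repMem_mul hq hs) (mul_ne_zero hq0 hs0) hzw,
      hDq _ p q hp hq hq0 rfl, hDq _ r s hr hs hs0 rfl,
      hD0mul p r hp hr, hD0mul q s hq hs]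
    field_simp
    ring
  · -- restricts to D on N
    intro x hx
    rw [hDq x x 1 (repMem_of_memN hx) repMem_one one_ne_zero (by simp),
      hD0one, hD0N x hx]
    simp
  · -- restricts to D' on N'
    intro y hy
    rw [hDq y y 1 (repMem_of_memN' hy) repMem_one one_ne_zero (by simp),
      hD0one, hD0N' y hy]
    simp
  · -- uniqueness
    rintro E ⟨hEder, hEN, hEN'⟩ z hz
    have hER : ∀ w, RepMem N N' w → E w = D0 w := by
      rintro w ⟨n, x, y, hx, hy, rfl⟩
      rw [derOn_sum hEder _ _ (fun i _ =>
        mul_mem (Subfield.subset_closure (Set.mem_union_left _ (hx i)))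
          (Subfield.subset_closure (Set.mem_union_right _ (hy i)))),
        hD0 _ n x y hx hy rfl]
      refine Finset.sum_congr rfl fun i _ => ?_
      rw [hEder.2.2 _ (Subfield.subset_closure (Set.mem_union_left _ (hx i)))
        _ (Subfield.subset_closure (Set.mem_union_right _ (hy i))),
        hEN _ (hx i), hEN' _ (hy i)]
    obtain ⟨p, q, hp, hq, hq0, rfl⟩ := closure_eq_quot N N' _ hz
    have hqL : q ∈ Subfield.closure ((N : Set Ω) ∪ (N' : Set Ω)) :=
      repMem_subset_closure hq
    have hprod : E (p / q * q) = E (p / q) * q + p / q * E q := hEder.2.2 _ hz _ hqL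
    have hpq : p / q * q = p := by field_simp
    rw [hpq, hER p hp, hER q hq] at hprod
    rw [hDq _ p q hp hq hq0 rfl]
    field_simp at hprod ⊢
    linear_combination -hprod
end

section
/- Let Ω be an algebraically closed field, E an algebraically closed subfield of Ω, and A a subfield of Ω that is linearly disjoint from E over A ∩ E. Then the algebraic closure of A inside Ω meets E exactly in the algebraic closure of A ∩ E inside Ω; that is, every element of E that is algebraic over A is already algebraic over A ∩ E. -/
/-- `x` is field-theoretically algebraic over the subset `A` of `Ω`. -/
def AlgebraicOver (Ω : Type*) [Field Ω] (A : Set Ω) (x : Ω) : Prop :=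
  ∃ q : Polynomial Ω, q ≠ 0 ∧ (∀ i, q.coeff i ∈ A) ∧ Polynomial.eval x q = 0

/-- Translation between the raw notion `LinIndepOver` and Mathlib's `LinearIndependent`. -/
lemma linIndepOver_iff_linearIndependent_s8 {Ω : Type*} [Field Ω] (R : Type*) [Field R]
    [Algebra R Ω] (s : Set Ω) (hs : ∀ y, y ∈ s ↔ ∃ r : R, algebraMap R Ω r = y)
    {n : ℕ} (v : Fin n → Ω) :
    LinIndepOver Ω s v ↔ LinearIndependent R v := by
  rw [Fintype.linearIndependent_iff]
  constructor
  · intro h g hg i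
    have h0 := h (fun i => algebraMap R Ω (g i)) (fun i => (hs _).mpr ⟨g i, rfl⟩)
      (by simpa [Algebra.smul_def] using hg) i
    exact (algebraMap R Ω).injective (by rw [h0, map_zero])
  · intro h c hc hsum i
    choose r hr using fun i => (hs (c i)).mp (hc i)
    have h0 := h r (by
      rw [← hsum]
      exact Finset.sum_congr rfl fun i _ => by rw [Algebra.smul_def, hr])
    rw [← hr i, h0 i, map_zero]

set_option maxHeartbeats 2000000 in
set_option synthInstance.maxHeartbeats 1000000 in
theorem algClosure_inter_algClosed_subfield
    (Ω : Type*) [Field Ω] [IsAlgClosed Ω]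
    (E : Subfield Ω) (hE : IsAlgClosed ↥E)
    (A : Subfield Ω)
    -- `A` is linearly disjoint from `E` over `A ∩ E`
    (hld : LinDisjOver Ω ((A ⊓ E : Subfield Ω) : Set Ω) (A : Set Ω) (E : Set Ω)) :
    {x : Ω | AlgebraicOver Ω (A : Set Ω) x} ∩ (E : Set Ω) =
      {x : Ω | AlgebraicOver Ω ((A ⊓ E : Subfield Ω) : Set Ω) x} := by
  classical
  set k : Subfield Ω := A ⊓ E with hk
  let A' : IntermediateField ↥k Ω :=
    A.toIntermediateField (fun x => (Subfield.mem_inf.mp x.2).1)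
  let E' : IntermediateField ↥k Ω :=
    E.toIntermediateField (fun x => (Subfield.mem_inf.mp x.2).2)
  have hmemA' : ∀ y : Ω, y ∈ A' ↔ y ∈ A := fun y => Iff.rfl
  have hmemE' : ∀ y : Ω, y ∈ E' ↔ y ∈ E := fun y => Iff.rfl
  have hsk : ∀ y : Ω, y ∈ (k : Set Ω) ↔ ∃ r : ↥k, algebraMap ↥k Ω r = y := by
    intro y
    exact ⟨fun h => ⟨⟨y, h⟩, rfl⟩, by rintro ⟨r, rfl⟩; exact r.2⟩
  have hsA : ∀ y : Ω, y ∈ (A : Set Ω) ↔ ∃ r : ↥A', algebraMap ↥A' Ω r = y := by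
    intro y
    exact ⟨fun h => ⟨⟨y, h⟩, rfl⟩, by rintro ⟨r, rfl⟩; exact r.2⟩
  have hsE : ∀ y : Ω, y ∈ (E : Set Ω) ↔ ∃ r : ↥E', algebraMap ↥E' Ω r = y := by
    intro y
    exact ⟨fun h => ⟨⟨y, h⟩, rfl⟩, by rintro ⟨r, rfl⟩; exact r.2⟩
  -- Mathlib-style linear disjointness of A' and E'
  have hAE : A'.LinearDisjoint E' := by
    refine IntermediateField.LinearDisjoint.symm
      (IntermediateField.LinearDisjoint.of_basis_right
        (Module.Basis.ofVectorSpace ↥k ↥A') ?_)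
    set b := Module.Basis.ofVectorSpace ↥k ↥A'
    rw [linearIndependent_iff']
    intro s g hg i hi
    set n := s.card
    set e := s.equivFin
    -- the finite tuple of elements of A
    set w : Fin n → Ω := fun j => A'.val (b (e.symm j)) with hw
    have hwA : ∀ j, w j ∈ (A : Set Ω) := fun j => (b (e.symm j)).2
    have hwk : LinIndepOver Ω (k : Set Ω) w := by
      rw [linIndepOver_iff_linearIndependent_s8 ↥k (k : Set Ω) hsk]
      have h1 : LinearIndependent ↥k (fun j : Fin n => b (e.symm j)) :=
        b.linearIndependent.comp (fun j => ((e.symm j : ↥s) : _))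
          (fun a a' h => e.symm.injective (Subtype.val_injective h))
      exact h1.map' A'.val.toLinearMap (LinearMap.ker_eq_bot_of_injective
        (fun a a' h => Subtype.ext h))
    have hwE : LinIndepOver Ω (E : Set Ω) w := hld n w hwA hwk
    rw [linIndepOver_iff_linearIndependent_s8 ↥E' (E : Set Ω) hsE] at hwE
    rw [Fintype.linearIndependent_iff] at hwE
    have hg' : ∑ i ∈ s, g i • A'.val (b i) = 0 := by
      simpa [Function.comp] using hg
    have hsum : ∑ j : Fin n, g (↑(e.symm j)) • w j = ∑ i ∈ s, g i • A'.val (b i) :=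
      calc ∑ j : Fin n, g (↑(e.symm j)) • w j
          = ∑ x : ↥s, g ↑x • A'.val (b ↑x) :=
            Equiv.sum_comp e.symm (fun x : ↥s => g ↑x • A'.val (b ↑x))
        _ = ∑ i ∈ s, g i • A'.val (b i) := Finset.sum_coe_sort s (fun i => g i • A'.val (b i))
    have h0 := hwE (fun j => g (e.symm j)) (by rw [hsum, hg'])
    have h1 := h0 (e ⟨i, hi⟩)
    simp only [Equiv.symm_apply_apply] at h1
    exact h1
  -- the two directions
  ext x
  simp only [Set.mem_inter_iff, Set.mem_setOf_eq]
  constructor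
  · rintro ⟨⟨q, hq0, hqA, hqx⟩, hxE⟩
    set n := q.natDegree + 1
    set v : Fin n → Ω := fun j => x ^ (j : ℕ) with hv
    have hvnot : ¬ LinIndepOver Ω (k : Set Ω) v := by
      intro hvk
      rw [linIndepOver_iff_linearIndependent_s8 ↥k (k : Set Ω) hsk] at hvk
      set vE : Fin n → ↥E' := fun j => ⟨x ^ (j : ℕ), pow_mem hxE _⟩ with hvE
      have hvk' : LinearIndependent ↥k vE :=
        hvk.of_comp E'.val.toLinearMap
      have hvA : LinearIndependent ↥A' (E'.val ∘ vE) :=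
        hAE.linearIndependent_right hvk'
      have hvA' : LinIndepOver Ω (A : Set Ω) v := by
        rw [linIndepOver_iff_linearIndependent_s8 ↥A' (A : Set Ω) hsA]
        exact hvA
      have hall := hvA' (fun j => q.coeff (j : ℕ)) (fun j => hqA _) (by
        rw [← hqx, Polynomial.eval_eq_sum_range]
        rw [← Fin.sum_univ_eq_sum_range (fun i => q.coeff i * x ^ i) n])
      have hlead : q.coeff q.natDegree ≠ 0 := fun h =>
        hq0 (Polynomial.leadingCoeff_eq_zero.mp h)
      exact hlead (hall ⟨q.natDegree, Nat.lt_succ_self _⟩)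
    rw [LinIndepOver] at hvnot
    push_neg at hvnot
    obtain ⟨c, hck, hcsum, i0, hi0⟩ := hvnot
    refine ⟨∑ j : Fin n, Polynomial.C (c j) * Polynomial.X ^ (j : ℕ), ?_, ?_, ?_⟩
    · intro hzero
      apply hi0
      have := congrArg (fun p => Polynomial.coeff p (i0 : ℕ)) hzero
      simp only [Polynomial.finset_sum_coeff, Polynomial.coeff_C_mul,
        Polynomial.coeff_X_pow, Polynomial.coeff_zero, mul_ite, mul_one, mul_zero] at this
      rwa [Finset.sum_eq_single i0
        (fun j _ hji => if_neg (fun h => hji ((Fin.val_injective h).symm)))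
        (fun h => absurd (Finset.mem_univ i0) h), if_pos rfl] at this
    · intro m
      rw [Polynomial.finset_sum_coeff]
      refine Subfield.sum_mem k (fun j _ => ?_)
      rw [Polynomial.coeff_C_mul, Polynomial.coeff_X_pow]
      split
      · rw [mul_one]; exact hck j
      · rw [mul_zero]; exact zero_mem k
    · rw [Polynomial.eval_finset_sum]
      simpa using hcsum
  · rintro ⟨q, hq0, hqk, hqx⟩
    have hqA : ∀ i, q.coeff i ∈ A := fun i => (Subfield.mem_inf.mp (hqk i)).1
    have hqE : ∀ i, q.coeff i ∈ E := fun i => (Subfield.mem_inf.mp (hqk i)).2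
    refine ⟨⟨q, hq0, hqA, hqx⟩, ?_⟩
    -- x is algebraic over E, and E is algebraically closed, so x ∈ E
    haveI := hE
    have hcoe : ↑q.coeffs ⊆ (E.toSubring : Set Ω) := by
      intro y hy
      simp only [Finset.mem_coe, Polynomial.mem_coeffs_iff] at hy
      obtain ⟨m, _, rfl⟩ := hy
      exact hqE m
    set qE : Polynomial ↥E.toSubring := q.toSubring E.toSubring hcoe with hqE'
    have hmap : qE.map E.toSubring.subtype = q := Polynomial.map_toSubring _ _ _
    have hqE0 : qE ≠ 0 := by
      intro h
      apply hq0
      rw [← hmap, h, Polynomial.map_zero]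
    have halg : IsAlgebraic ↥E x := by
      refine ⟨qE, hqE0, ?_⟩
      rw [Polynomial.aeval_def, ← Polynomial.eval_map]
      rw [show (algebraMap ↥E Ω) = E.toSubring.subtype from rfl, hmap]
      exact hqx
    have hint : IsIntegral ↥E x := halg.isIntegral
    have hirr := minpoly.irreducible hint
    have hdeg := IsAlgClosed.degree_eq_one_of_irreducible ↥E hirr
    have hx : x ∈ (algebraMap ↥E Ω).range := minpoly.degree_eq_one_iff.mp hdeg
    obtain ⟨r, rfl⟩ := hx
    exact r.2
end
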